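/- arXiv:math/0312081 — 2 statements merged into one kernel-verified Lean document; each statement's English description precedes it below -/
import Mathlib

section
/- Let (E,d) be a complete separable metric space and μ a Borel probability measure on E. Then μ satisfies T₁(C) for some constant C > 0 if and only if there exist ε > 0 and x₀ ∈ E such that ∫ exp(ε·d(x,x₀)²) dμ(x) < ∞. -/
/-!
Necessity: `μ` conditioned on `{t ≤ d(·, x₀)}` has entropy `-log μ(t ≤ d(·, x₀))` and must be moved
a distance at least `t - r` away from a ball `B(x₀, r)` of mass `1/2`, so `T₁(C)` forces the
Gaussian tail `μ(t ≤ d(·, x₀)) ≤ exp(-(t - r)² / 8C)`, which makes `exp(ε d(·, x₀)²)` integrable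
for small `ε`.

Sufficiency: with `ν = h μ` and `H = H(ν,μ)`, the entropy inequality
`∫ G dν ≤ H + ∫ (exp G - 1) dμ` for `G = ε d(·, x₀)²` bounds the second moments of `μ` and `ν` by
`O(H + 1)`. For `H ≥ 1` the independent coupling then costs `O(√H)`. For `H ≤ 1` the coupling that
leaves `min(h, 1) μ` in place costs at most `∫ d(·, x₀) |h - 1| dμ`, which is `O(√H)` by
Cauchy–Schwarz and `(t - 1)² ≤ (2t + 2)(t log t + 1 - t)`.
-/

open MeasureTheory ENNReal
open scoped Classical

noncomputable section

/-- `π` is a coupling of the probability measures `μ` and `ν`: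
its marginal distributions are `μ` and `ν`. -/
def IsCoupling {E : Type*} [MeasurableSpace E] (π : Measure (E × E)) (μ ν : Measure E) : Prop :=
  π.map Prod.fst = μ ∧ π.map Prod.snd = ν

/-- The `p`-th power of the `L^p` Wasserstein distance, `W_p^p(μ,ν)`, as the infimum of the
transportation cost over all couplings. -/
def Wcost {E : Type*} [MetricSpace E] [MeasurableSpace E] (p : ℝ) (μ ν : Measure E) : ℝ≥0∞ :=
  ⨅ (π : Measure (E × E)) (_ : IsProbabilityMeasure π) (_ : IsCoupling π μ ν),
    ∫⁻ z, ENNReal.ofReal (dist z.1 z.2 ^ p) ∂π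

/-- Relative entropy (Kullback-Leibler information) `H(ν,μ)`:
`∫ log (dν/dμ) dν` if `ν ≪ μ` (and the integral exists), `+∞` otherwise. -/
def relEnt {Ω : Type*} [MeasurableSpace Ω] (ν μ : Measure Ω) : ℝ≥0∞ :=
  if ν ≪ μ ∧ Integrable (fun x => Real.log ((ν.rnDeriv μ) x).toReal) ν
  then ENNReal.ofReal (∫ x, Real.log ((ν.rnDeriv μ) x).toReal ∂ν)
  else ∞

/-- The transportation cost inequality `T_p(C)`: `W_p(μ,ν) ≤ √(2 C H(ν,μ))` for every
probability measure `ν`. -/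
def TCI {E : Type*} [MetricSpace E] [MeasurableSpace E] (p : ℝ) (C : ℝ) (μ : Measure E) : Prop :=
  ∀ ν : Measure E, IsProbabilityMeasure ν →
    Wcost p μ ν ^ (1 / p) ≤ (ENNReal.ofReal (2 * C) * relEnt ν μ) ^ (1 / 2 : ℝ)

/-- The measure `ν = h·μ`. -/
def densMeas {Ω : Type*} [MeasurableSpace Ω] (μ : Measure Ω) (h : Ω → ℝ) : Measure Ω :=
  μ.withDensity fun x => ENNReal.ofReal (h x)

/-- The truncated measure `ν_a = (1/ν(h ≤ a)) · h · 1_{h ≤ a} · μ` for `ν = h·μ`. -/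
def truncMeas {Ω : Type*} [MeasurableSpace Ω] (μ : Measure Ω) (h : Ω → ℝ) (a : ℝ) : Measure Ω :=
  ((densMeas μ h) {x | h x ≤ a})⁻¹ • (densMeas μ h).restrict {x | h x ≤ a}

open Set InformationTheory ProbabilityTheory

namespace IsCoupling

variable {E : Type*} [MeasurableSpace E] {π π' : Measure (E × E)} {μ μ' ν ν' : Measure E}

lemma add (h : IsCoupling π μ ν) (h' : IsCoupling π' μ' ν') :
    IsCoupling (π + π') (μ + μ') (ν + ν') :=
  ⟨by rw [Measure.map_add _ _ measurable_fst, h.1, h'.1],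
    by rw [Measure.map_add _ _ measurable_snd, h.2, h'.2]⟩

lemma isProbabilityMeasure (h : IsCoupling π μ ν) [IsProbabilityMeasure μ] :
    IsProbabilityMeasure π :=
  ⟨by rw [← preimage_univ (f := Prod.fst), ← Measure.map_apply measurable_fst MeasurableSet.univ,
    h.1, measure_univ]⟩

lemma lintegral_fst (h : IsCoupling π μ ν) {f : E → ℝ≥0∞} (hf : Measurable f) :
    ∫⁻ z, f z.1 ∂π = ∫⁻ x, f x ∂μ := by
  rw [← h.1, lintegral_map hf measurable_fst]

lemma lintegral_snd (h : IsCoupling π μ ν) {f : E → ℝ≥0∞} (hf : Measurable f) :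
    ∫⁻ z, f z.2 ∂π = ∫⁻ x, f x ∂ν := by
  rw [← h.2, lintegral_map hf measurable_snd]

end IsCoupling

section Coupling

variable {E : Type*} [MeasurableSpace E]

lemma isCoupling_map_diag (γ : Measure E) : IsCoupling (γ.map fun x => (x, x)) γ γ := by
  have hΔ : Measurable fun x : E => (x, x) := measurable_id.prodMk measurable_id
  exact ⟨by rw [Measure.map_map measurable_fst hΔ]; exact Measure.map_id,
    by rw [Measure.map_map measurable_snd hΔ]; exact Measure.map_id⟩

lemma isCoupling_smul_prod {α β : Measure E} [IsFiniteMeasure α] [IsFiniteMeasure β]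
    (h : α univ = β univ) : IsCoupling ((α univ)⁻¹ • α.prod β) α β := by
  have key : ∀ ρ : Measure E, ρ univ = α univ → ((α univ)⁻¹ * α univ) • ρ = ρ := by
    intro ρ hρ
    rcases eq_or_ne (α univ) 0 with h0 | h0
    · rw [Measure.measure_univ_eq_zero.1 (hρ.trans h0), smul_zero]
    · rw [ENNReal.inv_mul_cancel h0 (measure_ne_top α univ), one_smul]
  constructor
  · rw [Measure.map_smul, Measure.map_fst_prod, smul_smul, ← h, key α rfl]
  · rw [Measure.map_smul, Measure.map_snd_prod, smul_smul, key β h.symm]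

end Coupling

/-- Cauchy–Schwarz. `f` need not be measurable: this matters for `edist` on `E × E`, which need
not be measurable for the product σ-algebra when `E` is not separable. -/
lemma sq_lintegral_le_mul {α : Type*} [MeasurableSpace α] {μ : Measure α} {f g k : α → ℝ≥0∞}
    (hg : AEMeasurable g μ) (hk : AEMeasurable k μ) (h : ∀ᵐ x ∂μ, f x ^ 2 ≤ g x * k x) :
    (∫⁻ x, f x ∂μ) ^ 2 ≤ (∫⁻ x, g x ∂μ) * ∫⁻ x, k x ∂μ := by
  have hsqrt : ∀ y : ℝ≥0∞, (y ^ (1 / 2 : ℝ)) ^ (2 : ℝ) = y := fun y => by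
    rw [← ENNReal.rpow_mul]; norm_num
  have hf : ∫⁻ x, f x ∂μ ≤ (∫⁻ x, g x ∂μ) ^ (1 / 2 : ℝ) * (∫⁻ x, k x ∂μ) ^ (1 / 2 : ℝ) := calc
    ∫⁻ x, f x ∂μ ≤ ∫⁻ x, g x ^ (1 / 2 : ℝ) * k x ^ (1 / 2 : ℝ) ∂μ := by
      refine lintegral_mono_ae (h.mono fun x hx => ?_)
      rw [← ENNReal.mul_rpow_of_nonneg _ _ (by norm_num), ← ENNReal.rpow_le_rpow_iff two_pos,
        hsqrt, ENNReal.rpow_two]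
      exact hx
    _ ≤ _ := by
      simpa only [hsqrt, Pi.mul_apply] using ENNReal.lintegral_mul_le_Lp_mul_Lq μ
        Real.HolderConjugate.two_two (hg.pow_const (1 / 2 : ℝ)) (hk.pow_const (1 / 2 : ℝ))
  calc (∫⁻ x, f x ∂μ) ^ 2
      ≤ ((∫⁻ x, g x ∂μ) ^ (1 / 2 : ℝ) * (∫⁻ x, k x ∂μ) ^ (1 / 2 : ℝ)) ^ 2 := by gcongr
    _ = (∫⁻ x, g x ∂μ) * ∫⁻ x, k x ∂μ := by
      rw [mul_pow, ← ENNReal.rpow_two, ← ENNReal.rpow_two, hsqrt, hsqrt]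

lemma edist_sq_le_two_mul {E : Type*} [PseudoMetricSpace E] (x y z : E) :
    edist x y ^ 2 ≤ 2 * (edist x z ^ 2 + edist y z ^ 2) := by
  simp only [edist_dist, ← ENNReal.ofReal_pow dist_nonneg]
  rw [← ENNReal.ofReal_add (by positivity) (by positivity), ← ENNReal.ofReal_ofNat 2,
    ← ENNReal.ofReal_mul zero_le_two]
  exact ENNReal.ofReal_le_ofReal
    ((pow_le_pow_left₀ dist_nonneg (dist_triangle_right x y z) 2).trans add_sq_le)

section Wasserstein

variable {E : Type*} [MetricSpace E] [MeasurableSpace E] {μ ν : Measure E}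

lemma wcost_one_le_lintegral_edist {π : Measure (E × E)} [IsProbabilityMeasure π]
    (h : IsCoupling π μ ν) : Wcost 1 μ ν ≤ ∫⁻ z, edist z.1 z.2 ∂π :=
  (iInf₂_le π ‹_›).trans ((iInf_le _ h).trans_eq (by simp_rw [Real.rpow_one, edist_dist]))

lemma ofReal_mul_le_wcost_one {A B : Set E} (hA : MeasurableSet A) (hB : MeasurableSet B)
    {δ : ℝ} (hAB : ∀ x ∈ A, ∀ y ∈ B, δ ≤ dist x y) (hν : ν Bᶜ = 0) :
    ENNReal.ofReal δ * μ A ≤ Wcost 1 μ ν := by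
  refine le_iInf₂ fun π _ => le_iInf fun h => ?_
  have hπ : μ A ≤ π (A ×ˢ B) := calc
    μ A = π (Prod.fst ⁻¹' A) := by rw [← h.1, Measure.map_apply measurable_fst hA]
    _ ≤ π (A ×ˢ B ∪ Prod.snd ⁻¹' Bᶜ) := measure_mono fun z hz => by
      by_cases hzB : z.2 ∈ B
      exacts [Or.inl ⟨hz, hzB⟩, Or.inr hzB]
    _ ≤ π (A ×ˢ B) + π (Prod.snd ⁻¹' Bᶜ) := measure_union_le _ _
    _ = π (A ×ˢ B) := by rw [← Measure.map_apply measurable_snd hB.compl, h.2, hν, add_zero]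
  calc ENNReal.ofReal δ * μ A ≤ ENNReal.ofReal δ * π (A ×ˢ B) := by gcongr
    _ = ∫⁻ z, (A ×ˢ B).indicator (fun _ => ENNReal.ofReal δ) z ∂π :=
      (lintegral_indicator_const (hA.prod hB) _).symm
    _ ≤ ∫⁻ z, ENNReal.ofReal (dist z.1 z.2 ^ (1 : ℝ)) ∂π := lintegral_mono <| Set.indicator_le
      fun z hz => ENNReal.ofReal_le_ofReal (by rw [Real.rpow_one]; exact hAB _ hz.1 _ hz.2)

variable [OpensMeasurableSpace E]

lemma lintegral_edist_le_of_isCoupling {π : Measure (E × E)} (h : IsCoupling π μ ν) (x₀ : E) :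
    ∫⁻ z, edist z.1 z.2 ∂π ≤ ∫⁻ x, edist x x₀ ∂μ + ∫⁻ x, edist x x₀ ∂ν := calc
  ∫⁻ z, edist z.1 z.2 ∂π ≤ ∫⁻ z, edist z.1 x₀ + edist z.2 x₀ ∂π :=
    lintegral_mono fun z => edist_triangle_right _ _ _
  _ = _ := by
    rw [lintegral_add_left (by fun_prop : Measurable fun z : E × E => edist z.1 x₀),
      h.lintegral_fst measurable_edist_left, h.lintegral_snd measurable_edist_left]

/-- The bound given by the independent coupling `μ ⊗ ν`. -/
lemma sq_wcost_one_le [IsProbabilityMeasure μ] [IsProbabilityMeasure ν] (x₀ : E) :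
    Wcost 1 μ ν ^ 2 ≤ 2 * (∫⁻ x, edist x x₀ ^ 2 ∂μ + ∫⁻ x, edist x x₀ ^ 2 ∂ν) := by
  have hprod : IsCoupling (μ.prod ν) μ ν := by
    simpa using isCoupling_smul_prod (α := μ) (β := ν) (by simp)
  have hΦ : Measurable fun x => edist x x₀ ^ 2 := measurable_edist_left.pow_const 2
  calc Wcost 1 μ ν ^ 2 ≤ (∫⁻ z, edist z.1 z.2 ∂μ.prod ν) ^ 2 := by
        gcongr; exact wcost_one_le_lintegral_edist hprod
    _ ≤ (∫⁻ z, 2 * (edist z.1 x₀ ^ 2 + edist z.2 x₀ ^ 2) ∂μ.prod ν) * ∫⁻ _, 1 ∂μ.prod ν :=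
      sq_lintegral_le_mul (by fun_prop) aemeasurable_const
        (ae_of_all _ fun z => by simpa using edist_sq_le_two_mul z.1 z.2 x₀)
    _ = _ := by
      rw [lintegral_one, measure_univ, mul_one, lintegral_const_mul _ (by fun_prop),
        lintegral_add_left (by fun_prop : Measurable fun z : E × E => edist z.1 x₀ ^ 2),
        hprod.lintegral_fst hΦ, hprod.lintegral_snd hΦ]

end Wasserstein

section MinimalCoupling

variable {E : Type*} [MetricSpace E] [MeasurableSpace E] [OpensMeasurableSpace E] {μ : Measure E}

/-- The bound given by the coupling that leaves the common part `min h 1 • μ` of `μ` and `h • μ`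
in place and couples the remainders independently. -/
lemma wcost_one_withDensity_le [IsProbabilityMeasure μ] {h : E → ℝ≥0∞} (hh : Measurable h)
    (hmass : ∫⁻ x, h x ∂μ = 1) (x₀ : E) :
    Wcost 1 μ (μ.withDensity h) ≤ ∫⁻ x, edist x x₀ * ((1 - h x) + (h x - 1)) ∂μ := by
  set γ := μ.withDensity fun x => min (h x) 1
  set α := μ.withDensity fun x => 1 - h x
  set β := μ.withDensity fun x => h x - 1
  have hγα : γ + α = μ := by
    rw [← withDensity_add_left (hh.min measurable_const)]
    convert withDensity_one (μ := μ) using 2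
    funext x
    rw [Pi.add_apply, min_comm, add_comm, tsub_add_min, Pi.one_apply]
  have hγβ : γ + β = μ.withDensity h := by
    rw [← withDensity_add_left (hh.min measurable_const)]
    congr 1 with x
    rw [Pi.add_apply, add_comm, tsub_add_min]
  have hν : IsFiniteMeasure (μ.withDensity h) := isFiniteMeasure_withDensity (by simp [hmass])
  have hα : IsFiniteMeasure α := isFiniteMeasure_of_le μ (hγα ▸ Measure.le_add_left le_rfl)
  have hβ : IsFiniteMeasure β := isFiniteMeasure_of_le _ (hγβ ▸ Measure.le_add_left le_rfl)
  have hγ : IsFiniteMeasure γ := isFiniteMeasure_of_le μ (hγα ▸ Measure.le_add_right le_rfl)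
  have hαβ : α univ = β univ := by
    refine (ENNReal.add_right_inj (measure_ne_top γ univ)).1 ?_
    rw [← Measure.add_apply, ← Measure.add_apply, hγα, hγβ, withDensity_apply _ MeasurableSet.univ,
      Measure.restrict_univ, hmass, measure_univ]
  have hπ := (isCoupling_map_diag γ).add (isCoupling_smul_prod hαβ)
  rw [hγα, hγβ] at hπ
  have := hπ.isProbabilityMeasure
  calc Wcost 1 μ (μ.withDensity h)
      ≤ (∫⁻ z, edist z.1 z.2 ∂γ.map fun x => (x, x))
        + ∫⁻ z, edist z.1 z.2 ∂(α univ)⁻¹ • α.prod β := by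
        rw [← lintegral_add_measure]; exact wcost_one_le_lintegral_edist hπ
    _ ≤ 0 + (∫⁻ x, edist x x₀ ∂α + ∫⁻ x, edist x x₀ ∂β) := by
      gcongr
      · exact (lintegral_map_le _ _).trans_eq (by simp)
      · exact lintegral_edist_le_of_isCoupling (isCoupling_smul_prod hαβ) x₀
    _ = _ := by
      rw [zero_add, lintegral_withDensity_eq_lintegral_mul _ (by fun_prop) measurable_edist_left,
        lintegral_withDensity_eq_lintegral_mul _ (by fun_prop) measurable_edist_left,
        ← lintegral_add_left (by fun_prop)]
      congr 1 with x
      simp only [Pi.mul_apply]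
      ring

end MinimalCoupling

section Entropy

open Real

variable {Ω : Type*} [MeasurableSpace Ω] {μ ν : Measure Ω}

lemma relEnt_eq_klDiv [IsProbabilityMeasure ν] [IsProbabilityMeasure μ] :
    relEnt ν μ = klDiv ν μ := by
  change (if ν ≪ μ ∧ Integrable (llr ν μ) ν then ENNReal.ofReal (∫ x, llr ν μ x ∂ν) else ∞) = _
  by_cases h : ν ≪ μ ∧ Integrable (llr ν μ) ν
  · rw [if_pos h, klDiv_of_ac_of_integrable h.1 h.2]
    simp
  · rw [if_neg h, eq_comm, klDiv_eq_top_iff]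
    exact fun hac hint => h ⟨hac, hint⟩

lemma absolutelyContinuous_of_relEnt_ne_top (h : relEnt ν μ ≠ ∞) : ν ≪ μ := by
  by_contra hac
  simp [relEnt, hac] at h

lemma relEnt_self [IsProbabilityMeasure μ] : relEnt μ μ = 0 := by
  rw [relEnt_eq_klDiv, klDiv_self]

lemma relEnt_eq_lintegral_klFun [IsProbabilityMeasure ν] [IsProbabilityMeasure μ] (hac : ν ≪ μ) :
    relEnt ν μ = ∫⁻ x, ENNReal.ofReal (klFun (ν.rnDeriv μ x).toReal) ∂μ := by
  rw [relEnt_eq_klDiv, klDiv_eq_lintegral_klFun_of_ac hac]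

/-- Young's inequality for `klFun` and its convex conjugate `g ↦ exp g - 1`. -/
lemma mul_le_klFun_add_exp_sub_one {t : ℝ} (ht : 0 ≤ t) (g : ℝ) :
    t * g ≤ klFun t + (exp g - 1) := by
  rcases ht.eq_or_lt with rfl | ht
  · simp [klFun_zero, (exp_pos g).le]
  · have key := mul_le_mul_of_nonneg_left (add_one_le_exp (g - log t)) ht.le
    rw [exp_sub, exp_log ht, mul_div_cancel₀ _ ht.ne'] at key
    rw [klFun_apply]
    linarith

lemma sq_sub_one_le_mul_klFun {t : ℝ} (ht : 0 ≤ t) : (t - 1) ^ 2 ≤ (2 * t + 2) * klFun t := by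
  rcases ht.eq_or_lt with rfl | ht
  · simp [klFun_zero]
  set s := √t
  have hs : 0 < s := sqrt_pos.2 ht
  have hst : s ^ 2 = t := sq_sqrt ht.le
  -- `(√t - 1)² ≤ klFun t` is `log s ≥ 1 - 1/s` for `s = √t`.
  have hellinger : (s - 1) ^ 2 ≤ klFun t := by
    have hlog := mul_le_mul_of_nonneg_left (one_sub_inv_le_log_of_pos hs)
      (by positivity : 0 ≤ 2 * s ^ 2)
    rw [klFun_apply, ← hst, Real.log_pow, Nat.cast_ofNat]
    field_simp at hlog
    nlinarith
  calc (t - 1) ^ 2 = (s + 1) ^ 2 * (s - 1) ^ 2 := by rw [← hst]; ring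
    _ ≤ (2 * t + 2) * klFun t := by
      gcongr
      nlinarith [sq_nonneg (s - 1)]

lemma lintegral_le_relEnt_add [IsProbabilityMeasure ν] [IsProbabilityMeasure μ] (G : Ω → ℝ) :
    ∫⁻ x, ENNReal.ofReal (G x) ∂ν ≤ relEnt ν μ + ∫⁻ x, ENNReal.ofReal (exp (G x) - 1) ∂μ := by
  by_cases hac : ν ≪ μ
  swap
  · simp [relEnt, hac]
  rw [relEnt_eq_lintegral_klFun hac, ← lintegral_add_left (by fun_prop)]
  conv_lhs => rw [← Measure.withDensity_rnDeriv_eq ν μ hac]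
  refine (lintegral_withDensity_le_lintegral_mul _ (Measure.measurable_rnDeriv ν μ) _).trans
    (lintegral_mono_ae ((Measure.rnDeriv_lt_top ν μ).mono fun x hx => ?_))
  rw [Pi.mul_apply, ← ENNReal.ofReal_toReal hx.ne, ENNReal.toReal_ofReal ENNReal.toReal_nonneg,
    ← ENNReal.ofReal_mul ENNReal.toReal_nonneg]
  exact (ENNReal.ofReal_le_ofReal (mul_le_klFun_add_exp_sub_one ENNReal.toReal_nonneg _)).trans
    ENNReal.ofReal_add_le

lemma one_tsub_add_tsub_one_sq_le {t : ℝ≥0∞} (ht : t ≠ ∞) :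
    (1 - t + (t - 1)) ^ 2 ≤ (2 * t + 2) * ENNReal.ofReal (klFun t.toReal) := by
  obtain ⟨s, hs, rfl⟩ : ∃ s : ℝ, 0 ≤ s ∧ ENNReal.ofReal s = t :=
    ⟨t.toReal, ENNReal.toReal_nonneg, ENNReal.ofReal_toReal ht⟩
  have hrhs : (2 * ENNReal.ofReal s + 2) * ENNReal.ofReal (klFun s)
      = ENNReal.ofReal ((2 * s + 2) * klFun s) := by
    rw [ENNReal.ofReal_mul (by positivity), ENNReal.ofReal_add (by positivity) zero_le_two,
      ENNReal.ofReal_mul zero_le_two, ENNReal.ofReal_ofNat]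
  rw [ENNReal.toReal_ofReal hs, hrhs, ← ENNReal.ofReal_one, ← ENNReal.ofReal_sub _ hs,
    ← ENNReal.ofReal_sub _ zero_le_one]
  refine le_trans ?_ (ENNReal.ofReal_le_ofReal (sq_sub_one_le_mul_klFun hs))
  rcases le_total s 1 with h | h
  · rw [ENNReal.ofReal_of_nonpos (sub_nonpos.2 h), add_zero, ← ENNReal.ofReal_pow (sub_nonneg.2 h)]
    exact ENNReal.ofReal_le_ofReal (by nlinarith)
  · rw [ENNReal.ofReal_of_nonpos (sub_nonpos.2 h), zero_add, ← ENNReal.ofReal_pow (sub_nonneg.2 h)]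

lemma relEnt_cond [IsProbabilityMeasure μ] {B : Set Ω} (hB : MeasurableSet B) (hB0 : μ B ≠ 0) :
    relEnt μ[|B] μ = ENNReal.ofReal (-Real.log (μ.real B)) := by
  have := cond_isProbabilityMeasure (μ := μ) hB0
  have hrn : μ[|B].rnDeriv μ =ᵐ[μ] fun x => (μ B)⁻¹ * B.indicator 1 x :=
    (Measure.rnDeriv_smul_left_of_ne_top' (μ.restrict B) μ (ENNReal.inv_ne_top.2 hB0)).trans
      ((Measure.rnDeriv_restrict_self μ hB).mono fun x hx => by simp [hx])
  have hlog : (fun x => Real.log (μ[|B].rnDeriv μ x).toReal) =ᵐ[μ[|B]]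
      fun _ => -Real.log (μ.real B) := by
    filter_upwards [cond_absolutelyContinuous.ae_le hrn, ae_cond_mem hB] with x hx hxB
    rw [hx, Set.indicator_of_mem hxB, Pi.one_apply, mul_one, ENNReal.toReal_inv, Real.log_inv,
      measureReal_def]
  rw [relEnt, if_pos ⟨cond_absolutelyContinuous, (integrable_const _).congr hlog.symm⟩,
    integral_congr_ae hlog, integral_const, probReal_univ, one_smul]

end Entropy

section SecondMoment

variable {E : Type*} [MetricSpace E] [MeasurableSpace E] {μ ν : Measure E}

lemma ofReal_mul_lintegral_edist_sq_le [IsProbabilityMeasure ν] [IsProbabilityMeasure μ]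
    {ε : ℝ} (hε : 0 ≤ ε) (x₀ : E) :
    ENNReal.ofReal ε * ∫⁻ x, edist x x₀ ^ 2 ∂ν
      ≤ relEnt ν μ + ∫⁻ x, ENNReal.ofReal (Real.exp (ε * dist x x₀ ^ 2)) ∂μ := by
  rw [← lintegral_const_mul' _ _ ENNReal.ofReal_ne_top]
  simp_rw [edist_dist, ← ENNReal.ofReal_pow dist_nonneg, ← ENNReal.ofReal_mul hε]
  refine (lintegral_le_relEnt_add (μ := μ) _).trans ?_
  gcongr with x
  linarith [Real.exp_pos (ε * dist x x₀ ^ 2)]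

lemma sq_wcost_one_le_mul_relEnt [OpensMeasurableSpace E] [IsProbabilityMeasure μ]
    [IsProbabilityMeasure ν] (hac : ν ≪ μ) (x₀ : E) :
    Wcost 1 μ ν ^ 2 ≤ 2 * (∫⁻ x, edist x x₀ ^ 2 ∂μ + ∫⁻ x, edist x x₀ ^ 2 ∂ν) * relEnt ν μ := by
  set h := ν.rnDeriv μ
  have hh : Measurable h := Measure.measurable_rnDeriv ν μ
  have hν : μ.withDensity h = ν := Measure.withDensity_rnDeriv_eq ν μ hac
  have hmass : ∫⁻ x, h x ∂μ = 1 := by rw [Measure.lintegral_rnDeriv hac, measure_univ]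
  have hmoment : ∫⁻ x, edist x x₀ ^ 2 * (2 * h x + 2) ∂μ
      = 2 * (∫⁻ x, edist x x₀ ^ 2 ∂μ + ∫⁻ x, edist x x₀ ^ 2 ∂ν) := by
    rw [← hν, lintegral_withDensity_eq_lintegral_mul _ hh (by fun_prop),
      ← lintegral_add_left (by fun_prop), ← lintegral_const_mul _ (by fun_prop)]
    refine lintegral_congr fun x => ?_
    simp only [Pi.mul_apply]
    ring
  calc Wcost 1 μ ν ^ 2 ≤ (∫⁻ x, edist x x₀ * (1 - h x + (h x - 1)) ∂μ) ^ 2 := by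
        gcongr; exact hν ▸ wcost_one_withDensity_le hh hmass x₀
    _ ≤ (∫⁻ x, edist x x₀ ^ 2 * (2 * h x + 2) ∂μ) * ∫⁻ x, ENNReal.ofReal (klFun (h x).toReal) ∂μ :=
      sq_lintegral_le_mul (by fun_prop) (by fun_prop) <|
        (Measure.rnDeriv_lt_top ν μ).mono fun x hx => by
          rw [mul_pow, mul_assoc]
          gcongr
          exact one_tsub_add_tsub_one_sq_le hx.ne
    _ = _ := by rw [hmoment, relEnt_eq_lintegral_klFun hac]

end SecondMoment

section Sufficiency

variable {E : Type*} [MetricSpace E] [MeasurableSpace E] [OpensMeasurableSpace E]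
  {μ ν : Measure E}

/-- For `H(ν,μ) ≤ 1` use the coupling fixing the common part of `μ` and `ν`, for `H(ν,μ) ≥ 1`
the independent coupling. -/
lemma ofReal_mul_sq_wcost_one_le [IsProbabilityMeasure μ] [IsProbabilityMeasure ν] {ε : ℝ}
    (hε : 0 ≤ ε) (x₀ : E) :
    ENNReal.ofReal ε * Wcost 1 μ ν ^ 2
      ≤ 2 * (1 + 2 * ∫⁻ x, ENNReal.ofReal (Real.exp (ε * dist x x₀ ^ 2)) ∂μ) * relEnt ν μ := by
  set A := ∫⁻ x, ENNReal.ofReal (Real.exp (ε * dist x x₀ ^ 2)) ∂μ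
  set H := relEnt ν μ
  set S := ∫⁻ x, edist x x₀ ^ 2 ∂μ + ∫⁻ x, edist x x₀ ^ 2 ∂ν
  have hS : ENNReal.ofReal ε * S ≤ H + 2 * A := by
    have hμ := ofReal_mul_lintegral_edist_sq_le (μ := μ) (ν := μ) hε x₀
    have hν := ofReal_mul_lintegral_edist_sq_le (μ := μ) (ν := ν) hε x₀
    rw [relEnt_self, zero_add] at hμ
    calc ENNReal.ofReal ε * S ≤ A + (H + A) := by rw [mul_add]; gcongr
      _ = H + 2 * A := by ring
  rcases le_total H 1 with hH | hH
  · have hac : ν ≪ μ := absolutelyContinuous_of_relEnt_ne_top (hH.trans_lt one_lt_top).ne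
    calc ENNReal.ofReal ε * Wcost 1 μ ν ^ 2 ≤ ENNReal.ofReal ε * (2 * S * H) := by
          gcongr; exact sq_wcost_one_le_mul_relEnt hac x₀
      _ = 2 * (ENNReal.ofReal ε * S) * H := by ring
      _ ≤ 2 * (1 + 2 * A) * H := by gcongr; exact hS.trans (by gcongr)
  · calc ENNReal.ofReal ε * Wcost 1 μ ν ^ 2 ≤ ENNReal.ofReal ε * (2 * S) := by
          gcongr; exact sq_wcost_one_le x₀
      _ = 2 * (ENNReal.ofReal ε * S) := by ring
      _ ≤ 2 * (H + 2 * A * H) := by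
        gcongr; exact hS.trans (add_le_add le_rfl (le_mul_of_one_le_right' hH))
      _ = 2 * (1 + 2 * A) * H := by ring

theorem tci_one_of_integrable_exp_mul_sq [IsProbabilityMeasure μ] {ε : ℝ} (hε : 0 < ε) {x₀ : E}
    (hI : Integrable (fun x => Real.exp (ε * dist x x₀ ^ 2)) μ) :
    TCI 1 ((1 + 2 * ∫ x, Real.exp (ε * dist x x₀ ^ 2) ∂μ) / ε) μ := by
  intro ν _
  set a := ∫ x, Real.exp (ε * dist x x₀ ^ 2) ∂μ
  have ha : 0 ≤ a := integral_nonneg fun x => (Real.exp_pos _).le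
  have hC : ENNReal.ofReal ε * ENNReal.ofReal (2 * ((1 + 2 * a) / ε))
      = 2 * (1 + 2 * ∫⁻ x, ENNReal.ofReal (Real.exp (ε * dist x x₀ ^ 2)) ∂μ) := by
    rw [← ENNReal.ofReal_mul hε.le, show ε * (2 * ((1 + 2 * a) / ε)) = 2 * (1 + 2 * a) by
        field_simp, ENNReal.ofReal_mul zero_le_two, ENNReal.ofReal_add zero_le_one (by positivity),
      ENNReal.ofReal_mul zero_le_two,
      ofReal_integral_eq_lintegral_ofReal hI (ae_of_all _ fun x => (Real.exp_pos _).le)]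
    simp
  rw [div_one, ENNReal.rpow_one, one_div, ENNReal.le_rpow_inv_iff two_pos, ENNReal.rpow_two,
    ← ENNReal.mul_le_mul_iff_right (ENNReal.ofReal_pos.2 hε).ne' ENNReal.ofReal_ne_top,
    ← mul_assoc, hC]
  exact ofReal_mul_sq_wcost_one_le hε.le x₀

end Sufficiency

/-- Comparing `exp (c f² / 4)` with `exp (c (n + 1)² / 4)` on `{n ≤ f}` turns a Gaussian tail
bound into a geometric series. -/
lemma integrable_exp_mul_sq_of_measure_le {α : Type*} [MeasurableSpace α] {μ : Measure α}
    {f : α → ℝ} (hf : Measurable f) (hf0 : ∀ x, 0 ≤ f x) {K c : ℝ} (hK : 0 ≤ K) (hc : 0 < c)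
    (htail : ∀ t, 0 ≤ t → μ {x | t ≤ f x} ≤ ENNReal.ofReal (K * Real.exp (-c * t ^ 2))) :
    Integrable (fun x => Real.exp (c / 4 * f x ^ 2)) μ := by
  refine ⟨(by fun_prop : Measurable fun x => Real.exp (c / 4 * f x ^ 2)).aestronglyMeasurable, ?_⟩
  rw [hasFiniteIntegral_iff_ofReal (ae_of_all _ fun x => (Real.exp_pos _).le)]
  set q := Real.exp (-(c / 2))
  have hq : ENNReal.ofReal q < 1 := by
    rw [← ENNReal.ofReal_one]
    exact (ENNReal.ofReal_lt_ofReal_iff one_pos).2 (Real.exp_lt_one_iff.2 (by linarith))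
  set S : ℕ → Set α := fun n => {x | (n : ℝ) ≤ f x}
  have hS : ∀ n, MeasurableSet (S n) := fun n => measurableSet_le measurable_const hf
  have hpt : ∀ x, ENNReal.ofReal (Real.exp (c / 4 * f x ^ 2))
      ≤ ∑' n : ℕ, (S n).indicator (fun _ => ENNReal.ofReal (Real.exp (c / 4 * (n + 1) ^ 2))) x :=
    fun x => (ENNReal.le_tsum ⌊f x⌋₊).trans' <| by
      rw [Set.indicator_of_mem (show x ∈ S ⌊f x⌋₊ from Nat.floor_le (hf0 x))]
      gcongr
      exacts [hf0 x, (Nat.lt_floor_add_one _).le]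
  have hterm : ∀ n : ℕ, ENNReal.ofReal (Real.exp (c / 4 * (n + 1) ^ 2)) * μ (S n)
      ≤ ENNReal.ofReal (K * Real.exp (c / 2)) * ENNReal.ofReal q ^ n := fun n => calc
    _ ≤ ENNReal.ofReal (Real.exp (c / 4 * (n + 1) ^ 2))
        * ENNReal.ofReal (K * Real.exp (-c * n ^ 2)) := by
      gcongr; exact htail n n.cast_nonneg
    _ = ENNReal.ofReal (K * Real.exp (c / 4 * (n + 1) ^ 2 - c * n ^ 2)) := by
      rw [← ENNReal.ofReal_mul (Real.exp_pos _).le, sub_eq_add_neg, Real.exp_add, neg_mul]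
      ring_nf
    _ ≤ ENNReal.ofReal (K * Real.exp (c / 2 + n * -(c / 2))) := by
      have hn : (n : ℝ) ≤ n ^ 2 := by exact_mod_cast Nat.le_self_pow two_ne_zero n
      gcongr
      nlinarith [mul_nonneg hc.le (sq_nonneg ((n : ℝ) - 1)), mul_le_mul_of_nonneg_left hn hc.le]
    _ = _ := by
      rw [Real.exp_add, Real.exp_nat_mul, ← mul_assoc, ENNReal.ofReal_mul' (by positivity),
        ENNReal.ofReal_pow (Real.exp_pos _).le]
  calc ∫⁻ x, ENNReal.ofReal (Real.exp (c / 4 * f x ^ 2)) ∂μ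
      ≤ ∑' n : ℕ, ENNReal.ofReal (Real.exp (c / 4 * (n + 1) ^ 2)) * μ (S n) := by
        refine (lintegral_mono hpt).trans_eq ?_
        rw [lintegral_tsum fun n => (measurable_const.indicator (hS n)).aemeasurable]
        simp_rw [lintegral_indicator_const (hS _)]
    _ ≤ ∑' n : ℕ, ENNReal.ofReal (K * Real.exp (c / 2)) * ENNReal.ofReal q ^ n :=
        ENNReal.tsum_le_tsum hterm
    _ < ∞ := by
        rw [ENNReal.tsum_mul_left, ENNReal.tsum_geometric]
        exact ENNReal.mul_lt_top ENNReal.ofReal_lt_top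
          (ENNReal.inv_lt_top.2 (tsub_pos_of_lt hq))

section Necessity

variable {E : Type*} [MetricSpace E] [MeasurableSpace E] {μ : Measure E}

lemma exists_inv_two_le_measure_closedBall [IsProbabilityMeasure μ] (x₀ : E) :
    ∃ r : ℝ, 2⁻¹ ≤ μ (Metric.closedBall x₀ r) := by
  have hmono : Monotone fun n : ℕ => Metric.closedBall x₀ n :=
    fun m n hmn => Metric.closedBall_subset_closedBall (Nat.cast_le.2 hmn)
  have htend := tendsto_measure_iUnion_atTop (μ := μ) hmono
  rw [Metric.iUnion_closedBall_nat, measure_univ] at htend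
  obtain ⟨n, hn⟩ := (htend.eventually_const_le ENNReal.one_half_lt_one).exists
  exact ⟨n, hn⟩

/-- Testing `T₁(C)` on `μ` conditioned to `{t ≤ d(·, x₀)}`, which is at distance `t - r` from
a ball of mass `1/2`, gives a Gaussian tail. -/
lemma measure_le_dist_le_of_tci [OpensMeasurableSpace E] [IsProbabilityMeasure μ] {C : ℝ}
    (hC : 0 < C) (hT : TCI 1 C μ) {x₀ : E} {r t : ℝ} (hr : 2⁻¹ ≤ μ (Metric.closedBall x₀ r)) (hrt : r ≤ t) :
    μ {x | t ≤ dist x x₀} ≤ ENNReal.ofReal (Real.exp (-(t - r) ^ 2 / (8 * C))) := by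
  set B := {x | t ≤ dist x x₀}
  have hB : MeasurableSet B := measurableSet_le measurable_const
    (continuous_id.dist continuous_const).measurable
  rcases eq_or_ne (μ B) 0 with hB0 | hB0
  · simp [hB0]
  set L := -Real.log (μ.real B)
  have hL : 0 ≤ L := neg_nonneg.2 (Real.log_nonpos measureReal_nonneg measureReal_le_one)
  have hW : ENNReal.ofReal ((t - r) / 2) ≤ ENNReal.ofReal (√(2 * C * L)) := calc
    ENNReal.ofReal ((t - r) / 2) = ENNReal.ofReal (t - r) * 2⁻¹ := by
      rw [div_eq_mul_inv, ENNReal.ofReal_mul (by linarith), ENNReal.ofReal_inv_of_pos two_pos,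
        ENNReal.ofReal_ofNat]
    _ ≤ ENNReal.ofReal (t - r) * μ (Metric.closedBall x₀ r) := by gcongr
    _ ≤ Wcost 1 μ μ[|B] := by
      refine ofReal_mul_le_wcost_one Metric.isClosed_closedBall.measurableSet hB
        (fun x hx y hy => ?_) (by rw [cond_apply hB, inter_compl_self, measure_empty, mul_zero])
      have hy' : t ≤ dist y x₀ := hy
      linarith [dist_triangle_left y x₀ x, Metric.mem_closedBall.1 hx]
    _ ≤ ENNReal.ofReal (√(2 * C * L)) := by
      have := hT μ[|B] (cond_isProbabilityMeasure hB0)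
      rwa [relEnt_cond hB hB0, div_one, ENNReal.rpow_one, ← ENNReal.ofReal_mul (by positivity),
        ENNReal.ofReal_rpow_of_nonneg (by positivity) (by norm_num), ← Real.sqrt_eq_rpow] at this
  have hsq := (Real.le_sqrt (by linarith) (by positivity)).1
    ((ENNReal.ofReal_le_ofReal_iff (Real.sqrt_nonneg _)).1 hW)
  have hlog : Real.log (μ.real B) ≤ -(t - r) ^ 2 / (8 * C) := by
    rw [neg_div, le_neg, div_le_iff₀ (by positivity)]
    nlinarith
  rw [← ofReal_measureReal]
  exact ENNReal.ofReal_le_ofReal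
    ((Real.log_le_iff_le_exp (ENNReal.toReal_pos hB0 (measure_ne_top μ B))).1 hlog)

theorem exists_integrable_exp_mul_sq_of_tci [OpensMeasurableSpace E] [IsProbabilityMeasure μ]
    {C : ℝ} (hC : 0 < C) (hT : TCI 1 C μ) :
    ∃ ε > (0 : ℝ), ∃ x₀ : E, Integrable (fun x => Real.exp (ε * dist x x₀ ^ 2)) μ := by
  obtain ⟨x₀⟩ := nonempty_of_isProbabilityMeasure μ
  obtain ⟨r, hr⟩ := exists_inv_two_le_measure_closedBall (μ := μ) x₀
  have htail : ∀ t, 0 ≤ t → μ {x | t ≤ dist x x₀}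
      ≤ ENNReal.ofReal (Real.exp (r ^ 2 / (8 * C)) * Real.exp (-(1 / (16 * C)) * t ^ 2)) := by
    intro t ht
    rw [← Real.exp_add]
    rcases le_total r t with hrt | htr
    · have hsplit : -(t - r) ^ 2 / (8 * C)
          = r ^ 2 / (8 * C) + -(1 / (16 * C)) * t ^ 2 - (t - 2 * r) ^ 2 / (16 * C) := by
        field_simp; ring
      refine (measure_le_dist_le_of_tci hC hT hr hrt).trans (ENNReal.ofReal_le_ofReal ?_)
      gcongr
      rw [hsplit]
      linarith [div_nonneg (sq_nonneg (t - 2 * r)) (by positivity : (0 : ℝ) ≤ 16 * C)]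
    · have hsplit : r ^ 2 / (8 * C) + -(1 / (16 * C)) * t ^ 2 = (2 * r ^ 2 - t ^ 2) / (16 * C) := by
        field_simp; ring
      have htr2 : t ^ 2 ≤ r ^ 2 := pow_le_pow_left₀ ht htr 2
      refine prob_le_one.trans ?_
      rw [← ENNReal.ofReal_one, hsplit]
      exact ENNReal.ofReal_le_ofReal (Real.one_le_exp (div_nonneg (by nlinarith) (by positivity)))
  exact ⟨_, by positivity, x₀, integrable_exp_mul_sq_of_measure_le
    (continuous_id.dist continuous_const).measurable (fun _ => dist_nonneg) (Real.exp_pos _).le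
    (by positivity) htail⟩

end Necessity

theorem t1_iff_gauss_integrable_general
    {E : Type*} [MetricSpace E]
    [MeasurableSpace E] [BorelSpace E]
    (μ : Measure E) (hprob : IsProbabilityMeasure μ) :
    (∃ C > (0 : ℝ), TCI 1 C μ) ↔
      (∃ ε > (0 : ℝ), ∃ x₀ : E, Integrable (fun x => Real.exp (ε * dist x x₀ ^ 2)) μ) := by
  constructor
  · rintro ⟨C, hC, hT⟩
    exact exists_integrable_exp_mul_sq_of_tci hC hT
  · rintro ⟨ε, hε, x₀, hI⟩
    exact ⟨_, by positivity, tci_one_of_integrable_exp_mul_sq hε hI⟩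

/-- **Theorem 1.4 (Djellout–Guillin–Wu).** `μ` satisfies `T₁(C)` for some `C > 0` if and only if
`∫ exp(ε d(x,x₀)²) dμ < ∞` for some `ε > 0` and some `x₀`. -/
theorem t1_iff_gauss_integrable
    {E : Type*} [MetricSpace E] [CompleteSpace E] [TopologicalSpace.SeparableSpace E]
    [MeasurableSpace E] [BorelSpace E]
    (μ : Measure E) (hprob : IsProbabilityMeasure μ) :
    (∃ C > (0 : ℝ), TCI 1 C μ) ↔
      (∃ ε > (0 : ℝ), ∃ x₀ : E, Integrable (fun x => Real.exp (ε * dist x x₀ ^ 2)) μ) :=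
  t1_iff_gauss_integrable_general μ hprob

end
end

section
/- Let μ be a probability measure on a measurable space, h ≥ 0 a measurable function with ∫ h dμ = 1, and ν = h·μ a probability measure with H(ν,μ) ≤ 1/2. Let a > e^{3/2}; then ν(h ≤ a) > 0 and the truncated measure ν_a = (1/ν(h ≤ a))·h·1_{h ≤ a}·μ satisfies H(ν_a, μ) ≤ ( 1 + 1/(2·(log a − 3/2)) + 2/(log a − 1) )·H(ν,μ). -/
open MeasureTheory ENNReal
open scoped Classical

noncomputable section

/-! Put `T = {h ≤ a}`, `z = ν(T) = ∫_T h` and `m = 1 - z`. Since `x log x ≥ x - 1`, and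
`h log h ≥ h log a` off `T`, we get `H(ν,μ) ≥ (z - 1) + m log a = m (log a - 1)`; with
`H(ν,μ) ≤ 1/2` this gives `z ≥ 1 - 1/(2(log a - 1)) > 0`, i.e. `z⁻¹ ≤ 1 + 1/(2(log a - 3/2))`.
The density of `ν_a` is `1_T h / z`, so `H(ν_a,μ) = z⁻¹ ∫_T h log h - log z`, and
`-log z ≤ z⁻¹ - 1 = z⁻¹ m ≤ z⁻¹ ∫_{Tᶜ} h log h` bounds it by `z⁻¹ H(ν,μ)`. -/

theorem Real.mul_mul_log_mul (c x : ℝ) :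
    c * x * Real.log (c * x) = c * (x * Real.log x) + c * Real.log c * x := by
  have h := Real.negMulLog_mul c x
  simp only [Real.negMulLog] at h
  linarith

theorem indicator_const_mul_mul_log {Ω : Type*} {f : Ω → ℝ} (s : Set Ω) (c : ℝ) :
    (fun x => s.indicator (fun y => c * f y) x * Real.log (s.indicator (fun y => c * f y) x)) =
      s.indicator fun x => c * (f x * Real.log (f x)) + c * Real.log c * f x := by
  funext x
  by_cases hx : x ∈ s
  · simp only [Set.indicator_of_mem hx, Real.mul_mul_log_mul]
  · simp [hx]

section densMeas

variable {Ω : Type*} [MeasurableSpace Ω] {μ : Measure Ω} {f : Ω → ℝ}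

theorem densMeas_apply_of_integrable (hfi : Integrable f μ) (hf0 : ∀ x, 0 ≤ f x)
    {s : Set Ω} (hs : MeasurableSet s) :
    densMeas μ f s = ENNReal.ofReal (∫ x in s, f x ∂μ) := by
  rw [densMeas, withDensity_apply _ hs,
    ofReal_integral_eq_lintegral_ofReal hfi.restrict (ae_of_all _ hf0)]

theorem integrable_of_isFiniteMeasure_densMeas [IsFiniteMeasure (densMeas μ f)]
    (hf : Measurable f) (hf0 : ∀ x, 0 ≤ f x) : Integrable f μ := by
  have hfin : ∫⁻ x, ENNReal.ofReal (f x) ∂μ ≠ ∞ := by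
    simpa [densMeas] using measure_ne_top (densMeas μ f) Set.univ
  exact (integrable_toReal_of_lintegral_ne_top hf.ennreal_ofReal.aemeasurable hfin).congr
    (ae_of_all _ fun x => ENNReal.toReal_ofReal (hf0 x))

theorem integral_eq_one_of_isProbabilityMeasure_densMeas [IsProbabilityMeasure (densMeas μ f)]
    (hf : Measurable f) (hf0 : ∀ x, 0 ≤ f x) : ∫ x, f x ∂μ = 1 := by
  have h := measure_univ (μ := densMeas μ f)
  rw [densMeas_apply_of_integrable (integrable_of_isFiniteMeasure_densMeas hf hf0) hf0
    MeasurableSet.univ, Measure.restrict_univ] at h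
  exact ENNReal.ofReal_eq_one.1 h

theorem densMeas_indicator_const_mul {s : Set Ω} (hs : MeasurableSet s) {c : ℝ} (hc : 0 ≤ c) :
    densMeas μ (s.indicator fun x => c * f x) = ENNReal.ofReal c • (densMeas μ f).restrict s := by
  rw [densMeas, densMeas, restrict_withDensity hs, ← withDensity_indicator hs,
    ← withDensity_smul' _ _ ofReal_ne_top]
  congr 1
  funext x
  by_cases hx : x ∈ s
  · simp [hx, ENNReal.ofReal_mul hc]
  · simp [hx]

variable [SigmaFinite μ]

theorem log_rnDeriv_densMeas_ae_eq (hf : Measurable f) (hf0 : ∀ x, 0 ≤ f x) :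
    (fun x => Real.log ((densMeas μ f).rnDeriv μ x).toReal) =ᵐ[densMeas μ f]
      fun x => Real.log (f x) := by
  filter_upwards [(withDensity_absolutelyContinuous μ _).ae_le
    (Measure.rnDeriv_withDensity μ hf.ennreal_ofReal)] with x hx
  rw [densMeas, hx, ENNReal.toReal_ofReal (hf0 x)]

theorem integrable_log_rnDeriv_densMeas_iff (hf : Measurable f) (hf0 : ∀ x, 0 ≤ f x) :
    Integrable (fun x => Real.log ((densMeas μ f).rnDeriv μ x).toReal) (densMeas μ f) ↔
      Integrable (fun x => f x * Real.log (f x)) μ := by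
  rw [integrable_congr (log_rnDeriv_densMeas_ae_eq hf hf0), densMeas,
    integrable_withDensity_iff hf.ennreal_ofReal (ae_of_all _ fun x => ofReal_lt_top)]
  simp only [ENNReal.toReal_ofReal (hf0 _), mul_comm]

theorem relEnt_densMeas_of_integrable (hf : Measurable f) (hf0 : ∀ x, 0 ≤ f x)
    (hfi : Integrable (fun x => f x * Real.log (f x)) μ) :
    relEnt (densMeas μ f) μ = ENNReal.ofReal (∫ x, f x * Real.log (f x) ∂μ) := by
  rw [relEnt, if_pos ⟨withDensity_absolutelyContinuous μ _,
    (integrable_log_rnDeriv_densMeas_iff hf hf0).2 hfi⟩,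
    integral_congr_ae (log_rnDeriv_densMeas_ae_eq hf hf0)]
  congr 1
  rw [show densMeas μ f = μ.withDensity fun x => ((f x).toNNReal : ℝ≥0∞) from rfl,
    integral_withDensity_eq_integral_smul hf.real_toNNReal]
  simp [NNReal.smul_def, Real.coe_toNNReal _ (hf0 _)]

theorem integrable_mul_log_of_relEnt_densMeas_ne_top (hf : Measurable f) (hf0 : ∀ x, 0 ≤ f x)
    (hH : relEnt (densMeas μ f) μ ≠ ∞) : Integrable (fun x => f x * Real.log (f x)) μ := by
  by_contra hfi
  refine hH (if_neg ?_)
  rintro ⟨-, hlog⟩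
  exact hfi ((integrable_log_rnDeriv_densMeas_iff hf hf0).1 hlog)

end densMeas

section setIntegral

variable {Ω : Type*} [MeasurableSpace Ω] {μ : Measure Ω} {f : Ω → ℝ}

theorem setIntegral_sub_measureReal_le_setIntegral_mul_log [IsFiniteMeasure μ]
    (hfi : Integrable f μ) (hφ : Integrable (fun x => f x * Real.log (f x)) μ)
    (hf0 : ∀ x, 0 ≤ f x) (s : Set Ω) :
    ∫ x in s, f x ∂μ - μ.real s ≤ ∫ x in s, f x * Real.log (f x) ∂μ := by
  have h : ∫ x in s, (f x - 1) ∂μ ≤ ∫ x in s, f x * Real.log (f x) ∂μ :=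
    integral_mono (hfi.restrict.sub (integrable_const 1)) hφ.restrict
      fun x => Real.self_sub_one_le_mul_log (hf0 x)
  rwa [integral_sub hfi.restrict (integrable_const 1), integral_const,
    measureReal_restrict_apply_univ, smul_eq_mul, mul_one] at h

theorem setIntegral_mul_log_const_le (hfi : Integrable f μ)
    (hφ : Integrable (fun x => f x * Real.log (f x)) μ) (hf0 : ∀ x, 0 ≤ f x)
    {s : Set Ω} (hs : MeasurableSet s) {a : ℝ} (ha : 0 < a) (haf : ∀ x ∈ s, a ≤ f x) :
    (∫ x in s, f x ∂μ) * Real.log a ≤ ∫ x in s, f x * Real.log (f x) ∂μ := by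
  rw [← integral_mul_const]
  exact setIntegral_mono_on (hfi.mul_const _).restrict hφ.restrict hs fun x hx =>
    mul_le_mul_of_nonneg_left (Real.log_le_log ha (haf x hx)) (hf0 x)

theorem integrable_indicator_const_mul_mul_log (hfi : Integrable f μ)
    (hφ : Integrable (fun x => f x * Real.log (f x)) μ) {s : Set Ω} (hs : MeasurableSet s)
    (c : ℝ) :
    Integrable (fun x => s.indicator (fun y => c * f y) x *
      Real.log (s.indicator (fun y => c * f y) x)) μ := by
  rw [indicator_const_mul_mul_log]
  exact ((hφ.const_mul c).add (hfi.const_mul _)).indicator hs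

theorem integral_indicator_const_mul_mul_log (hfi : Integrable f μ)
    (hφ : Integrable (fun x => f x * Real.log (f x)) μ) {s : Set Ω} (hs : MeasurableSet s)
    (c : ℝ) :
    ∫ x, s.indicator (fun y => c * f y) x * Real.log (s.indicator (fun y => c * f y) x) ∂μ =
      c * ∫ x in s, f x * Real.log (f x) ∂μ + c * Real.log c * ∫ x in s, f x ∂μ := by
  rw [indicator_const_mul_mul_log, integral_indicator hs, integral_add (hφ.const_mul c).restrict
    (hfi.const_mul _).restrict, integral_const_mul, integral_const_mul]

end setIntegral

theorem inv_le_of_mul_sub_one_le {L z m : ℝ} (hL : 3 / 2 < L) (hzm : z + m = 1)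
    (hm : m * (L - 1) ≤ 1 / 2) : 0 < z ∧ z⁻¹ ≤ 1 + 1 / (2 * (L - 3 / 2)) := by
  have hz : (2 * L - 3) / (2 * (L - 1)) ≤ z := by
    rw [div_le_iff₀ (by linarith)]; nlinarith
  have hz0 : 0 < z := lt_of_lt_of_le (by apply div_pos <;> linarith) hz
  refine ⟨hz0, ?_⟩
  calc z⁻¹ ≤ ((2 * L - 3) / (2 * (L - 1)))⁻¹ := inv_anti₀ (by apply div_pos <;> linarith) hz
    _ = 1 + 1 / (2 * (L - 3 / 2)) := by
      field_simp [show 2 * L - 3 ≠ 0 by linarith]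
      ring

theorem inv_mul_sub_log_le {z m L HT Hc C : ℝ} (hz : 0 < z) (hzm : z + m = 1) (hm : 0 ≤ m)
    (hL : 1 ≤ L) (hHc : m * L ≤ Hc) (hzC : z⁻¹ ≤ C) (hH : 0 ≤ HT + Hc) :
    z⁻¹ * HT - Real.log z ≤ C * (HT + Hc) := by
  have hlog : -Real.log z ≤ z⁻¹ * m := by
    have h := Real.one_sub_inv_le_log_of_pos hz
    have : z⁻¹ * m = z⁻¹ - 1 := by
      rw [show m = 1 - z by linarith, mul_sub, mul_one, inv_mul_cancel₀ hz.ne']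
    linarith
  calc z⁻¹ * HT - Real.log z ≤ z⁻¹ * (HT + m) := by linarith
    _ ≤ z⁻¹ * (HT + Hc) := by gcongr; nlinarith
    _ ≤ C * (HT + Hc) := by gcongr

theorem truncMeas_eq_densMeas {Ω : Type*} [MeasurableSpace Ω] {μ : Measure Ω} {f : Ω → ℝ}
    (hf : Measurable f) (hfi : Integrable f μ) (hf0 : ∀ x, 0 ≤ f x) {a : ℝ}
    (hz : 0 < ∫ x in {x | f x ≤ a}, f x ∂μ) :
    truncMeas μ f a =
      densMeas μ ({x | f x ≤ a}.indicator fun x => (∫ y in {x | f x ≤ a}, f y ∂μ)⁻¹ * f x) := by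
  have hT : MeasurableSet {x | f x ≤ a} := measurableSet_le hf measurable_const
  rw [truncMeas, densMeas_apply_of_integrable hfi hf0 hT,
    densMeas_indicator_const_mul hT (inv_nonneg.2 hz.le), ENNReal.ofReal_inv_of_pos hz]

theorem relEnt_truncMeas {Ω : Type*} [MeasurableSpace Ω] {μ : Measure Ω} [SigmaFinite μ]
    {f : Ω → ℝ} (hf : Measurable f) (hfi : Integrable f μ) (hf0 : ∀ x, 0 ≤ f x)
    (hφ : Integrable (fun x => f x * Real.log (f x)) μ) {a : ℝ}
    (hz : 0 < ∫ x in {x | f x ≤ a}, f x ∂μ) :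
    relEnt (truncMeas μ f a) μ = ENNReal.ofReal ((∫ x in {x | f x ≤ a}, f x ∂μ)⁻¹ *
      ∫ x in {x | f x ≤ a}, f x * Real.log (f x) ∂μ - Real.log (∫ x in {x | f x ≤ a}, f x ∂μ)) := by
  have hT : MeasurableSet {x | f x ≤ a} := measurableSet_le hf measurable_const
  rw [truncMeas_eq_densMeas hf hfi hf0 hz, relEnt_densMeas_of_integrable
    ((hf.const_mul _).indicator hT)
    (Set.indicator_nonneg fun x _ => mul_nonneg (inv_nonneg.2 hz.le) (hf0 x))
    (integrable_indicator_const_mul_mul_log hfi hφ hT _),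
    integral_indicator_const_mul_mul_log hfi hφ hT, Real.log_inv, mul_right_comm,
    inv_mul_cancel₀ hz.ne', one_mul, ← sub_eq_add_neg]

/-- **Lemma 3.5.** For `ν = h·μ` with `H(ν,μ) ≤ 1/2` and `a > e^{3/2}`, the truncated measure
`ν_a` satisfies `H(ν_a,μ) ≤ (1 + 1/(2(log a - 3/2)) + 2/(log a - 1)) H(ν,μ)`. -/
theorem entropy_trunc_le
    {Ω : Type*} [MeasurableSpace Ω] (μ : Measure Ω) (hprob : IsProbabilityMeasure μ)
    (h : Ω → ℝ) (hmeas : Measurable h) (hpos : ∀ x, 0 ≤ h x)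
    (hint : IsProbabilityMeasure (densMeas μ h))
    (hH : relEnt (densMeas μ h) μ ≤ 1 / 2)
    (a : ℝ) (ha : a > Real.exp (3 / 2)) :
    0 < densMeas μ h {x | h x ≤ a} ∧
      relEnt (truncMeas μ h a) μ ≤
        ENNReal.ofReal (1 + 1 / (2 * (Real.log a - 3 / 2)) + 2 / (Real.log a - 1)) *
          relEnt (densMeas μ h) μ := by
  have ha0 : 0 < a := (Real.exp_pos _).trans ha
  have hL : 3 / 2 < Real.log a := (Real.lt_log_iff_exp_lt ha0).2 ha
  set T := {x | h x ≤ a}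
  have hT : MeasurableSet T := measurableSet_le hmeas measurable_const
  have hfi : Integrable h μ := integrable_of_isFiniteMeasure_densMeas hmeas hpos
  have hφ := integrable_mul_log_of_relEnt_densMeas_ne_top hmeas hpos (hH.trans_lt (by simp)).ne
  rw [relEnt_densMeas_of_integrable hmeas hpos hφ] at hH ⊢
  have hH' : ∫ x in T, h x * Real.log (h x) ∂μ + ∫ x in Tᶜ, h x * Real.log (h x) ∂μ ≤ 1 / 2 := by
    rwa [integral_add_compl hT hφ, ← ENNReal.ofReal_le_ofReal_iff (by norm_num),
      show ENNReal.ofReal (1 / 2) = 1 / 2 by simp]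
  set z := ∫ x in T, h x ∂μ
  set m := ∫ x in Tᶜ, h x ∂μ
  have hzm : z + m = 1 := by
    rw [integral_add_compl hT hfi, integral_eq_one_of_isProbabilityMeasure_densMeas hmeas hpos]
  have hm0 : 0 ≤ m := setIntegral_nonneg hT.compl fun x _ => hpos x
  have hHT : z - 1 ≤ ∫ x in T, h x * Real.log (h x) ∂μ :=
    (setIntegral_sub_measureReal_le_setIntegral_mul_log hfi hφ hpos T).trans'
      (by gcongr; exact measureReal_le_one)
  have hHc : m * Real.log a ≤ ∫ x in Tᶜ, h x * Real.log (h x) ∂μ :=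
    setIntegral_mul_log_const_le hfi hφ hpos hT.compl ha0 fun x hx => le_of_lt (not_le.1 hx)
  obtain ⟨hz, hzC⟩ := inv_le_of_mul_sub_one_le hL hzm (by nlinarith)
  refine ⟨by rw [densMeas_apply_of_integrable hfi hpos hT]; exact ofReal_pos.2 hz, ?_⟩
  have hC : z⁻¹ ≤ 1 + 1 / (2 * (Real.log a - 3 / 2)) + 2 / (Real.log a - 1) :=
    hzC.trans (le_add_of_nonneg_right (div_nonneg zero_le_two (by linarith)))
  rw [relEnt_truncMeas hmeas hfi hpos hφ hz, ← ENNReal.ofReal_mul ((inv_nonneg.2 hz.le).trans hC),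
    ← integral_add_compl hT hφ]
  exact ENNReal.ofReal_le_ofReal (inv_mul_sub_log_le hz hzm hm0 (by linarith) hHc hC (by nlinarith))

end
end
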